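/- arXiv:2605.14193 — 5 statements merged into one kernel-verified Lean document; each statement's English description precedes it below -/
import Mathlib

section
/- Suppose each X_i ⊆ ℝ is nonempty, convex, and compact, each h_i is continuously differentiable and μ_i-strongly convex with μ_i > 0, and the contraction condition ρ(δ·D^{-1}·|G|) < 1 holds, where |G| is the entrywise absolute value of G and D = diag(μ_1,…,μ_N). Then, for every price vector p, the consumer game admits exactly one Nash equilibrium x*(p). -/
open Matrix

/-- Spectral radius of a real square matrix: the supremum of `|λ|` over all
complex eigenvalues `λ`. -/
noncomputable def specRad {n : Type*} [Fintype n] [DecidableEq n]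
    (M : Matrix n n ℝ) : ℝ :=
  sSup {r : ℝ | ∃ z : ℂ, z ∈ spectrum ℂ (M.map (algebraMap ℝ ℂ)) ∧ r = ‖z‖}

/-- Utility of consumer `i` when choosing consumption `y` while the others play
according to the profile `x`, at price vector `p`. -/
noncomputable def utility {N : ℕ} (a b : Fin N → ℝ) (δ : ℝ) (G : Matrix (Fin N) (Fin N) ℝ)
    (h : Fin N → ℝ → ℝ) (p x : Fin N → ℝ) (i : Fin N) (y : ℝ) : ℝ :=
  (a i - b i * p i + δ * ∑ j, G i j * Function.update x i y j) * y - h i y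

/-- `x` is a Nash equilibrium of the consumer game at price vector `p`. -/
def IsNashEq {N : ℕ} (X : Fin N → Set ℝ) (a b : Fin N → ℝ) (δ : ℝ)
    (G : Matrix (Fin N) (Fin N) ℝ) (h : Fin N → ℝ → ℝ) (p x : Fin N → ℝ) : Prop :=
  ∀ i, x i ∈ X i ∧ ∀ y ∈ X i, utility a b δ G h p x i y ≤ utility a b δ G h p x i (x i)

open Set Filter

/-!
Since `G i i = 0`, consumer `i`'s utility is `s_i y - h_i y` with a slope `s_i` that does not
depend on `x i`. Strong convexity makes the maximiser of such a function over a convex set unique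
and `μ_i⁻¹`-Lipschitz in the slope, so the best-response map `T` satisfies
`|T x - T y| ≤ δ D⁻¹ |G| |x - y|` componentwise, and Nash equilibria are exactly the fixed points
of `T` in `∏ X_i`. Because `ρ(δ D⁻¹ |G|) < 1`, Gelfand's formula yields a power of this matrix of
`ℓ^∞`-operator norm `< 1`; the corresponding iterate of `T` is then a contraction of the complete
set `∏ X_i` for the sup metric, and Banach's fixed-point theorem gives exactly one equilibrium.
-/

section StronglyConvexMax

variable {X : Set ℝ} {h : ℝ → ℝ} {μ s s' z z' : ℝ}

theorem IsMaxOn.add_sq_le_of_strongly_convex (hX : Convex ℝ X)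
    (hsc : ∀ y, h y ≥ h z + deriv h z * (y - z) + μ / 2 * (y - z) ^ 2)
    (hd : DifferentiableAt ℝ h z) (hz : z ∈ X) (hmax : IsMaxOn (fun y ↦ s * y - h y) X z)
    {y : ℝ} (hy : y ∈ X) : s * y - h y + μ / 2 * (y - z) ^ 2 ≤ s * z - h z := by
  have hfirst_order : (s - deriv h z) * (y - z) ≤ 0 := by
    have hderiv : HasDerivWithinAt (fun y ↦ s * y - h y) (s - deriv h z) X z :=
      ((hasDerivAt_id z).const_mul s |>.sub hd.hasDerivAt).hasDerivWithinAt.congr_deriv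
        (by simp)
    simpa [mul_comm] using hmax.localize.hasFDerivWithinAt_nonpos hderiv.hasFDerivWithinAt
      (sub_mem_posTangentConeAt_of_segment_subset (hX.segment_subset hz hy))
  linarith [hsc y]

theorem mul_abs_sub_le_abs_sub_of_isMaxOn (hX : Convex ℝ X)
    (hsc : ∀ x y, h y ≥ h x + deriv h x * (y - x) + μ / 2 * (y - x) ^ 2)
    (hd : Differentiable ℝ h) (hz : z ∈ X) (hz' : z' ∈ X)
    (hmax : IsMaxOn (fun y ↦ s * y - h y) X z) (hmax' : IsMaxOn (fun y ↦ s' * y - h y) X z') :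
    μ * |z - z'| ≤ |s - s'| := by
  have hgap : μ * |z - z'| * |z - z'| ≤ |s - s'| * |z - z'| := by
    have h₁ := hmax.add_sq_le_of_strongly_convex hX (hsc z) (hd z) hz hz'
    have h₂ := hmax'.add_sq_le_of_strongly_convex hX (hsc z') (hd z') hz' hz
    rw [mul_assoc, abs_mul_abs_self, ← abs_mul]
    nlinarith [le_abs_self ((s - s') * (z - z'))]
  rcases (abs_nonneg (z - z')).eq_or_lt with hzero | hpos
  · simp [← hzero]
  · exact le_of_mul_le_mul_right hgap hpos

theorem eq_of_isMaxOn_of_isMaxOn (hμ : 0 < μ) (hX : Convex ℝ X)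
    (hsc : ∀ x y, h y ≥ h x + deriv h x * (y - x) + μ / 2 * (y - x) ^ 2)
    (hd : Differentiable ℝ h) (hz : z ∈ X) (hz' : z' ∈ X)
    (hmax : IsMaxOn (fun y ↦ s * y - h y) X z) (hmax' : IsMaxOn (fun y ↦ s * y - h y) X z') :
    z = z' := by
  have hle := mul_abs_sub_le_abs_sub_of_isMaxOn hX hsc hd hz hz' hmax hmax'
  rw [sub_self, abs_zero] at hle
  exact sub_eq_zero.1 (abs_nonpos_iff.1 (nonpos_of_mul_nonpos_right hle hμ))

end StronglyConvexMax

section NonnegMatrix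

variable {ι : Type*} [Fintype ι]

theorem Matrix.mulVec_le_mulVec_of_nonneg {M : Matrix ι ι ℝ} (hM : ∀ i j, 0 ≤ M i j)
    {v w : ι → ℝ} (hvw : v ≤ w) : M *ᵥ v ≤ M *ᵥ w :=
  fun i ↦ Finset.sum_le_sum fun j _ ↦ mul_le_mul_of_nonneg_left (hvw j) (hM i j)

theorem Matrix.abs_mulVec_le (A : Matrix ι ι ℝ) (v : ι → ℝ) :
    |A *ᵥ v| ≤ of (fun i j ↦ |A i j|) *ᵥ |v| := fun i ↦ by
  simpa only [mulVec, dotProduct, of_apply, Pi.abs_apply, abs_mul]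
    using Finset.abs_sum_le_sum_abs (fun j ↦ A i j * v j) Finset.univ

end NonnegMatrix

theorem ContractingWith.existsUnique_isFixedPt_of_iterate {α : Type*} [MetricSpace α]
    [CompleteSpace α] [Nonempty α] {f : α → α} {K : NNReal} {k : ℕ}
    (hf : ContractingWith K f^[k]) : ∃! x, Function.IsFixedPt f x :=
  ⟨_, hf.isFixedPt_fixedPoint_iterate, fun _ hx ↦ hf.fixedPoint_unique (hx.iterate k)⟩

section LinftyOpNorm

variable {ι : Type*} [Fintype ι] [DecidableEq ι]

attribute [local instance] Matrix.linftyOpNormedRing Matrix.linftyOpNormedAlgebra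

theorem norm_lt_of_specRad_lt {M : Matrix ι ι ℝ} {r : ℝ} (hM : specRad M < r) {z : ℂ}
    (hz : z ∈ spectrum ℂ (M.map (algebraMap ℝ ℂ))) : ‖z‖ < r := by
  have hbdd : BddAbove {r : ℝ | ∃ z ∈ spectrum ℂ (M.map (algebraMap ℝ ℂ)), r = ‖z‖} := by
    refine ((finite_spectrum (M.map (algebraMap ℝ ℂ))).image (‖·‖ : ℂ → ℝ)).bddAbove.mono ?_
    rintro _ ⟨z, hz, rfl⟩
    exact ⟨z, hz, rfl⟩
  exact (le_csSup hbdd ⟨z, hz, rfl⟩).trans_lt hM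

theorem Matrix.linfty_opNorm_map_algebraMap (M : Matrix ι ι ℝ) :
    ‖M.map (algebraMap ℝ ℂ)‖ = ‖M‖ := by
  simp [linfty_opNorm_def]

theorem exists_linfty_opNorm_pow_lt_one_of_specRad_lt_one {M : Matrix ι ι ℝ}
    (hM : specRad M < 1) : ∃ k : ℕ, ‖M ^ k‖ < 1 := by
  cases isEmpty_or_nonempty ι
  · exact ⟨0, by simp [Subsingleton.elim (1 : Matrix ι ι ℝ) 0]⟩
  have : CompleteSpace (Matrix ι ι ℂ) := FiniteDimensional.complete ℂ _
  set A := M.map (algebraMap ℝ ℂ)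
  have hA : spectralRadius ℂ A < 1 := by
    simpa using spectrum.spectralRadius_lt_of_forall_lt A (r := 1) fun z hz ↦ by
      exact_mod_cast norm_lt_of_specRad_lt hM hz
  obtain ⟨k, hk, hk_pos⟩ :=
    ((spectrum.pow_nnnorm_pow_one_div_tendsto_nhds_spectralRadius A).eventually_lt_const hA
      |>.and (eventually_ge_atTop 1)).exists
  have hAk : ‖A ^ k‖₊ < 1 := by
    by_contra! hge
    exact (ENNReal.one_le_rpow (by exact_mod_cast hge) (by positivity)).not_gt hk
  refine ⟨k, ?_⟩
  rw [← linfty_opNorm_map_algebraMap, Matrix.map_pow]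
  exact_mod_cast hAk

theorem Matrix.norm_le_linfty_opNorm_mul_of_abs_le_mulVec {M : Matrix ι ι ℝ} {u v : ι → ℝ}
    (h : |u| ≤ M *ᵥ |v|) : ‖u‖ ≤ ‖M‖ * ‖v‖ := by
  have hnorm_abs : ‖|v|‖ = ‖v‖ := by simp [Pi.norm_def]
  refine (pi_norm_le_iff_of_nonneg (by positivity)).2 fun i ↦ ?_
  calc ‖u i‖ = |u i| := Real.norm_eq_abs _
    _ ≤ ‖(M *ᵥ |v|) i‖ := (h i).trans (Real.le_norm_self _)
    _ ≤ ‖M‖ * ‖v‖ := (norm_le_pi_norm _ i).trans (hnorm_abs ▸ linfty_opNorm_mulVec M |v|)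

variable {S : Set (ι → ℝ)} {T : (ι → ℝ) → ι → ℝ} {M : Matrix ι ι ℝ}

theorem abs_iterate_sub_le_pow_mulVec (hTS : MapsTo T S S) (hM : ∀ i j, 0 ≤ M i j)
    (hT : ∀ x ∈ S, ∀ y ∈ S, |T x - T y| ≤ M *ᵥ |x - y|) (k : ℕ) {x y : ι → ℝ} (hx : x ∈ S)
    (hy : y ∈ S) : |T^[k] x - T^[k] y| ≤ (M ^ k) *ᵥ |x - y| := by
  induction k with
  | zero => simp
  | succ k ih =>
    rw [Function.iterate_succ_apply', Function.iterate_succ_apply', pow_succ', ← mulVec_mulVec]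
    exact (hT _ (hTS.iterate k hx) _ (hTS.iterate k hy)).trans
      (mulVec_le_mulVec_of_nonneg hM ih)

theorem existsUnique_fixedPoint_of_abs_sub_le_mulVec (hS : IsClosed S) (hne : S.Nonempty)
    (hTS : MapsTo T S S) (hM : ∀ i j, 0 ≤ M i j) (hρ : specRad M < 1)
    (hT : ∀ x ∈ S, ∀ y ∈ S, |T x - T y| ≤ M *ᵥ |x - y|) : ∃! x ∈ S, T x = x := by
  have : Nonempty S := hne.to_subtype
  have : CompleteSpace S := hS.isComplete.completeSpace_coe
  obtain ⟨k, hk⟩ := exists_linfty_opNorm_pow_lt_one_of_specRad_lt_one hρ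
  have hcontr : ContractingWith ‖M ^ k‖₊ (hTS.restrict T S S)^[k] := by
    refine ⟨by exact_mod_cast hk, LipschitzWith.of_dist_le_mul fun x y ↦ ?_⟩
    simp only [Subtype.dist_eq, hTS.coe_iterate_restrict, dist_eq_norm, coe_nnnorm]
    exact norm_le_linfty_opNorm_mul_of_abs_le_mulVec
      (abs_iterate_sub_le_pow_mulVec hTS hM hT k x.2 y.2)
  obtain ⟨z, hz, huniq⟩ := hcontr.existsUnique_isFixedPt_of_iterate
  refine ⟨z, ⟨z.2, congrArg Subtype.val hz⟩, fun y ⟨hyS, hy⟩ ↦ ?_⟩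
  exact congrArg Subtype.val (huniq ⟨y, hyS⟩ (Subtype.ext hy))

end LinftyOpNorm

section ConsumerGame

variable {N : ℕ} {X : Fin N → Set ℝ} {a b : Fin N → ℝ} {δ : ℝ} {G : Matrix (Fin N) (Fin N) ℝ}
  {h : Fin N → ℝ → ℝ} {μ : Fin N → ℝ} {p : Fin N → ℝ} {T : (Fin N → ℝ) → Fin N → ℝ}

/-- The paper's `s_i(x_{-i}; p_i)`; once `G i i = 0` it does not depend on `x i`. -/
noncomputable def marginalBenefit (a b : Fin N → ℝ) (δ : ℝ) (G : Matrix (Fin N) (Fin N) ℝ)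
    (p x : Fin N → ℝ) : Fin N → ℝ :=
  a - b * p + δ • G *ᵥ x

theorem marginalBenefit_sub_marginalBenefit (x y : Fin N → ℝ) :
    marginalBenefit a b δ G p x - marginalBenefit a b δ G p y = δ • G *ᵥ (x - y) := by
  simp only [marginalBenefit, mulVec_sub, smul_sub]
  abel

theorem utility_eq_of_diag_eq_zero (hGdiag : ∀ i, G i i = 0) (x : Fin N → ℝ) (i : Fin N)
    (y : ℝ) : utility a b δ G h p x i y = marginalBenefit a b δ G p x i * y - h i y := by
  have hupdate : ∀ j, G i j * Function.update x i y j = G i j * x j := fun j ↦ by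
    rcases eq_or_ne j i with rfl | hj
    · simp [hGdiag]
    · rw [Function.update_of_ne hj]
  simp [utility, marginalBenefit, hupdate, mulVec, dotProduct]

theorem isNashEq_iff (hGdiag : ∀ i, G i i = 0) {x : Fin N → ℝ} :
    IsNashEq X a b δ G h p x ↔
      ∀ i, x i ∈ X i ∧ IsMaxOn (fun y ↦ marginalBenefit a b δ G p x i * y - h i y) (X i) (x i) := by
  simp only [IsNashEq, utility_eq_of_diag_eq_zero hGdiag, isMaxOn_iff]

theorem isNashEq_iff_mem_pi_and_fixedPoint (hGdiag : ∀ i, G i i = 0) (hμ : ∀ i, 0 < μ i)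
    (hXconv : ∀ i, Convex ℝ (X i))
    (hsc : ∀ i x y, h i y ≥ h i x + deriv (h i) x * (y - x) + μ i / 2 * (y - x) ^ 2)
    (hd : ∀ i, Differentiable ℝ (h i))
    (hT : ∀ x i, T x i ∈ X i ∧
      IsMaxOn (fun y ↦ marginalBenefit a b δ G p x i * y - h i y) (X i) (T x i))
    {x : Fin N → ℝ} : IsNashEq X a b δ G h p x ↔ x ∈ univ.pi X ∧ T x = x := by
  rw [isNashEq_iff hGdiag]
  refine ⟨fun hx ↦ ⟨fun i _ ↦ (hx i).1, funext fun i ↦ ?_⟩, fun ⟨hxX, hTx⟩ i ↦ ?_⟩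
  · exact eq_of_isMaxOn_of_isMaxOn (hμ i) (hXconv i) (hsc i) (hd i) (hT x i).1 (hx i).1
      (hT x i).2 (hx i).2
  · exact ⟨hxX i trivial, congrFun hTx i ▸ (hT x i).2⟩

theorem abs_bestResponse_sub_le (hδ : 0 ≤ δ) (hμ : ∀ i, 0 < μ i)
    (hXconv : ∀ i, Convex ℝ (X i))
    (hsc : ∀ i x y, h i y ≥ h i x + deriv (h i) x * (y - x) + μ i / 2 * (y - x) ^ 2)
    (hd : ∀ i, Differentiable ℝ (h i))
    (hT : ∀ x i, T x i ∈ X i ∧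
      IsMaxOn (fun y ↦ marginalBenefit a b δ G p x i * y - h i y) (X i) (T x i))
    (x y : Fin N → ℝ) :
    |T x - T y| ≤ (δ • diagonal (fun i ↦ (μ i)⁻¹) * of (fun i j ↦ |G i j|)) *ᵥ |x - y| := by
  intro i
  set s := marginalBenefit a b δ G p
  have hlip : μ i * |T x i - T y i| ≤ |s x i - s y i| :=
    mul_abs_sub_le_abs_sub_of_isMaxOn (hXconv i) (hsc i) (hd i) (hT x i).1 (hT y i).1
      (hT x i).2 (hT y i).2
  have hslope : |s x i - s y i| ≤ δ * (of (fun i j ↦ |G i j|) *ᵥ |x - y|) i := by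
    rw [← Pi.sub_apply, marginalBenefit_sub_marginalBenefit, Pi.smul_apply, smul_eq_mul,
      abs_mul, abs_of_nonneg hδ]
    exact mul_le_mul_of_nonneg_left (abs_mulVec_le G (x - y) i) hδ
  calc |T x i - T y i| ≤ (μ i)⁻¹ * |s x i - s y i| := by rwa [le_inv_mul_iff₀ (hμ i)]
    _ ≤ (μ i)⁻¹ * (δ * (of (fun i j ↦ |G i j|) *ᵥ |x - y|) i) := by
        gcongr; exact (inv_pos.2 (hμ i)).le
    _ = _ := by
      rw [← mulVec_mulVec, smul_mulVec, Pi.smul_apply, mulVec_diagonal, smul_eq_mul]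
      ring

end ConsumerGame

/-- Uniqueness of the Nash equilibrium under the contraction condition
`ρ(δ D⁻¹ |G|) < 1`, with `D = diag(μ)` and `|G|` the entrywise absolute value. -/
theorem unique_nash_equilibrium_contraction {N : ℕ}
    (X : Fin N → Set ℝ)
    (hX : ∀ i, (X i).Nonempty ∧ Convex ℝ (X i) ∧ IsCompact (X i))
    (a b : Fin N → ℝ) (δ : ℝ) (hδ : 0 ≤ δ)
    (G : Matrix (Fin N) (Fin N) ℝ) (hGdiag : ∀ i, G i i = 0)
    (h : Fin N → ℝ → ℝ) (hC1 : ∀ i, ContDiff ℝ 1 (h i))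
    (μ : Fin N → ℝ) (hμ : ∀ i, 0 < μ i)
    (hsc : ∀ i, ∀ x y : ℝ,
      h i y ≥ h i x + deriv (h i) x * (y - x) + μ i / 2 * (y - x) ^ 2)
    (hcontr : specRad (δ • (Matrix.diagonal fun i => (μ i)⁻¹) *
        Matrix.of (fun i j => |G i j|)) < 1) :
    ∀ p : Fin N → ℝ, ∃! x : Fin N → ℝ, IsNashEq X a b δ G h p x := by
  intro p
  have hd : ∀ i, Differentiable ℝ (h i) := fun i ↦ (hC1 i).differentiable one_ne_zero
  choose br hbrX hbrMax using fun i (r : ℝ) ↦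
    (hX i).2.2.exists_isMaxOn (f := fun y ↦ r * y - h i y) (hX i).1
      ((continuous_const.mul continuous_id).sub (hd i).continuous).continuousOn
  set T : (Fin N → ℝ) → Fin N → ℝ := fun x i ↦ br i (marginalBenefit a b δ G p x i)
  have hT : ∀ x i, T x i ∈ X i ∧
      IsMaxOn (fun y ↦ marginalBenefit a b δ G p x i * y - h i y) (X i) (T x i) :=
    fun x i ↦ ⟨hbrX _ _, hbrMax _ _⟩
  have hM : ∀ i j, 0 ≤ (δ • diagonal (fun i ↦ (μ i)⁻¹) * of (fun i j ↦ |G i j|)) i j := by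
    intro i j
    simp only [Matrix.smul_mul, Matrix.smul_apply, diagonal_mul, of_apply, smul_eq_mul]
    have := hμ i
    positivity
  simp_rw [isNashEq_iff_mem_pi_and_fixedPoint hGdiag hμ (fun i ↦ (hX i).2.1) hsc hd hT]
  exact existsUnique_fixedPoint_of_abs_sub_le_mulVec
    (isClosed_set_pi fun i _ ↦ (hX i).2.2.isClosed) (univ_pi_nonempty_iff.2 fun i ↦ (hX i).1)
    (fun x _ i _ ↦ (hT x i).1) hM hcontr
    fun x _ y _ ↦ abs_bestResponse_sub_le hδ hμ (fun i ↦ (hX i).2.1) hsc hd hT x y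
end

section
/- Suppose each X_i ⊆ ℝ is nonempty, convex, and compact, each h_i is continuously differentiable and μ_i-strongly convex with μ_i > 0, and the variational condition holds: the symmetric matrix D − δ·(G + Gᵀ)/2 is positive definite, where D = diag(μ_1,…,μ_N). Then, for every price vector p, the consumer game admits exactly one Nash equilibrium x*(p). -/
open Matrix

/-!
A Nash equilibrium is exactly a solution of the variational inequality on `∏ X i` for the
pseudo-gradient `F x i = h i' (x i) - s i x`, because each consumer maximises a concave function
of her own consumption over an interval. Writing `h i = (h i - μ i u² / 2) + μ i u² / 2` splits `F`
into the gradient of a separable convex function plus the affine map `x ↦ (D - δ G) x - c`, whose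
quadratic form is that of `D - δ (G + Gᵀ) / 2`, hence positive definite. Uniqueness follows by
adding the variational inequalities of two solutions. For existence, a forward step
`x ↦ x - t ((D - δ G) x - c)` is a strict contraction for small `t > 0` by coercivity, and the
coordinatewise resolvent of the convex part is nonexpansive, so their composite has a fixed point
by Banach's theorem; fixed points are solutions.
-/

open WithLp
open scoped RealInnerProductSpace NNReal

theorem IsMinOn.deriv_mul_sub_nonneg {g : ℝ → ℝ} {g' : ℝ} {X : Set ℝ} {u v : ℝ}
    (h : IsMinOn g X u) (hX : Convex ℝ X) (hu : u ∈ X) (hv : v ∈ X) (hg : HasDerivAt g g' u) :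
    0 ≤ g' * (v - u) := by
  have := h.localize.hasFDerivWithinAt_nonneg hg.hasFDerivAt.hasFDerivWithinAt
    (sub_mem_posTangentConeAt_of_segment_subset (hX.segment_subset hu hv))
  simpa [mul_comm] using this

theorem isMinOn_iff_forall_deriv_mul_sub_nonneg {g : ℝ → ℝ} {g' : ℝ} {X : Set ℝ} {u : ℝ}
    (hX : Convex ℝ X) (hu : u ∈ X) (hg : HasDerivAt g g' u)
    (hconv : ∀ v, g u + g' * (v - u) ≤ g v) :
    IsMinOn g X u ↔ ∀ v ∈ X, 0 ≤ g' * (v - u) :=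
  ⟨fun h _ hv => h.deriv_mul_sub_nonneg hX hu hv hg,
    fun h => isMinOn_iff.2 fun v hv => by linarith [hconv v, h v hv]⟩

theorem exists_lipschitzWith_one_resolvent {X : Set ℝ} (hne : X.Nonempty) (hX : Convex ℝ X)
    (hcpt : IsCompact X) {f f' : ℝ → ℝ} (hf : ∀ x, HasDerivAt f (f' x) x)
    (hconv : ∀ x y, f x + f' x * (y - x) ≤ f y) :
    ∃ P : ℝ → ℝ, (∀ y, P y ∈ X ∧ ∀ v ∈ X, 0 ≤ (f' (P y) + P y - y) * (v - P y)) ∧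
      LipschitzWith 1 P := by
  have hcont : Continuous f := continuous_iff_continuousAt.2 fun x => (hf x).continuousAt
  have hmin : ∀ y, ∃ u ∈ X, IsMinOn (fun u => f u + (u - y) ^ 2 / 2) X u := fun y =>
    hcpt.exists_isMinOn hne (by fun_prop)
  choose P hPX hPmin using hmin
  have hfoc : ∀ y, ∀ v ∈ X, 0 ≤ (f' (P y) + P y - y) * (v - P y) := fun y v hv => by
    have hd := (hf (P y)).fun_add ((((hasDerivAt_id' (P y)).sub_const y).fun_pow 2).div_const 2)
    rw [add_sub_assoc]
    exact (hPmin y).deriv_mul_sub_nonneg hX (hPX y) hv (hd.congr_deriv (by ring))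
  refine ⟨P, fun y => ⟨hPX y, hfoc y⟩, LipschitzWith.of_dist_le_mul fun y y' => ?_⟩
  -- monotonicity of `f'` plus the two variational inequalities give `(Δu)² ≤ Δy · Δu`
  have key : (P y - P y') ^ 2 ≤ (y - y') * (P y - P y') := by
    nlinarith [hfoc y _ (hPX y'), hfoc y' _ (hPX y), hconv (P y) (P y'), hconv (P y') (P y)]
  rw [NNReal.coe_one, one_mul, Real.dist_eq, Real.dist_eq]
  nlinarith [abs_mul_abs_self (P y - P y'), abs_mul (y - y') (P y - P y'),
    le_abs_self ((y - y') * (P y - P y')), abs_nonneg (P y - P y'), abs_nonneg (y - y')]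

section Coercive

variable {E : Type*} [NormedAddCommGroup E] [InnerProductSpace ℝ E] [FiniteDimensional ℝ E]

theorem ContinuousLinearMap.exists_pos_mul_norm_sq_le_inner (A : E →L[ℝ] E)
    (hA : ∀ z, z ≠ 0 → 0 < ⟪A z, z⟫) : ∃ α > 0, ∀ z, α * ‖z‖ ^ 2 ≤ ⟪A z, z⟫ := by
  rcases subsingleton_or_nontrivial E with hE | hE
  · exact ⟨1, one_pos, fun z => by simp [Subsingleton.elim z 0]⟩
  obtain ⟨u₀, hu₀, hmin⟩ := (isCompact_sphere (0 : E) 1).exists_isMinOn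
    (NormedSpace.sphere_nonempty.2 zero_le_one)
    (by fun_prop : Continuous fun z => ⟪A z, z⟫).continuousOn
  have hu₀_ne : u₀ ≠ 0 := ne_zero_of_mem_unit_sphere ⟨u₀, hu₀⟩
  refine ⟨⟪A u₀, u₀⟫, hA u₀ hu₀_ne, fun z => ?_⟩
  rcases eq_or_ne z 0 with rfl | hz
  · simp
  -- compare with the minimum at the unit vector `‖z‖⁻¹ • z`
  have hz' : ‖z‖ ≠ 0 := norm_ne_zero_iff.2 hz
  have hu : ‖z‖⁻¹ • z ∈ Metric.sphere (0 : E) 1 := by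
    simp [norm_smul, hz']
  have := isMinOn_iff.1 hmin _ hu
  simp only [map_smul, real_inner_smul_left, real_inner_smul_right] at this
  calc ⟪A u₀, u₀⟫ * ‖z‖ ^ 2 ≤ (‖z‖⁻¹ * (‖z‖⁻¹ * ⟪A z, z⟫)) * ‖z‖ ^ 2 := by gcongr
    _ = ⟪A z, z⟫ := by field_simp

theorem ContinuousLinearMap.exists_norm_sub_smul_le (A : E →L[ℝ] E)
    (hA : ∀ z, z ≠ 0 → 0 < ⟪A z, z⟫) :
    ∃ t : ℝ, 0 < t ∧ ∃ ρ : ℝ≥0, ρ < 1 ∧ ∀ z, ‖z - t • A z‖ ≤ ρ * ‖z‖ := by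
  obtain ⟨α, hα, hcoer⟩ := A.exists_pos_mul_norm_sq_le_inner hA
  -- `‖z - t A z‖² ≤ (1 - 2 t α + t² ‖A‖²) ‖z‖² ≤ (1 - t α) ‖z‖²` once `t ‖A‖² ≤ α`
  set t := α / (‖A‖ ^ 2 + 1)
  have ht : 0 < t := by positivity
  have htA : t * ‖A‖ ^ 2 ≤ α := by
    rw [div_mul_eq_mul_div, div_le_iff₀ (by positivity)]; nlinarith
  refine ⟨t, ht, (√(1 - t * α)).toNNReal, ?_, fun z => ?_⟩
  · rw [Real.toNNReal_lt_one, Real.sqrt_lt' one_pos]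
    nlinarith
  have hsq : ‖z - t • A z‖ ^ 2 ≤ (1 - t * α) * ‖z‖ ^ 2 := by
    have hAz : ‖A z‖ ^ 2 ≤ ‖A‖ ^ 2 * ‖z‖ ^ 2 := by
      rw [← mul_pow]; exact pow_le_pow_left₀ (norm_nonneg _) (A.le_opNorm z) 2
    have hAz' := mul_le_mul_of_nonneg_left hAz (sq_nonneg t)
    have htA' := mul_le_mul_of_nonneg_right htA (mul_nonneg ht.le (sq_nonneg ‖z‖))
    have hinner := mul_le_mul_of_nonneg_left (hcoer z) ht.le
    rw [norm_sub_sq_real, norm_smul, real_inner_smul_right, real_inner_comm,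
      Real.norm_of_nonneg ht.le]
    nlinarith
  rw [Real.coe_toNNReal _ (Real.sqrt_nonneg _), ← Real.sqrt_sq (norm_nonneg (z - t • A z)),
    ← Real.sqrt_sq (norm_nonneg z), ← Real.sqrt_mul' _ (sq_nonneg _)]
  exact Real.sqrt_le_sqrt hsq

end Coercive

section BoxVI

variable {ι : Type*} [Fintype ι]

def SolvesBoxVI (X : ι → Set ℝ) (F : (ι → ℝ) → ι → ℝ) (x : ι → ℝ) : Prop :=
  ∀ i, x i ∈ X i ∧ ∀ v ∈ X i, 0 ≤ F x i * (v - x i)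

theorem SolvesBoxVI.eq_of_dotProduct_sub_pos {X : ι → Set ℝ} {F : (ι → ℝ) → ι → ℝ}
    (hF : ∀ x y, x ≠ y → 0 < (x - y) ⬝ᵥ (F x - F y)) {x y : ι → ℝ}
    (hx : SolvesBoxVI X F x) (hy : SolvesBoxVI X F y) : x = y := by
  by_contra hne
  refine (hF x y hne).not_ge (Finset.sum_nonpos fun i _ => ?_)
  have hxi := (hx i).2 (y i) (hy i).1
  have hyi := (hy i).2 (x i) (hx i).1
  simp only [Pi.sub_apply]
  nlinarith

theorem dotProduct_sub_separable_add_mulVec_pos {f f' : ι → ℝ → ℝ}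
    (hconv : ∀ i x y, f i x + f' i x * (y - x) ≤ f i y) {M : Matrix ι ι ℝ}
    (hM : ∀ z, z ≠ 0 → 0 < z ⬝ᵥ M *ᵥ z) (c : ι → ℝ) {x y : ι → ℝ} (hxy : x ≠ y) :
    0 < (x - y) ⬝ᵥ
      (((fun i => f' i (x i)) + M *ᵥ x - c) - ((fun i => f' i (y i)) + M *ᵥ y - c)) := by
  have hsplit : ((fun i => f' i (x i)) + M *ᵥ x - c) - ((fun i => f' i (y i)) + M *ᵥ y - c)
      = (fun i => f' i (x i) - f' i (y i)) + M *ᵥ (x - y) := by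
    ext i; simp only [mulVec_sub, Pi.add_apply, Pi.sub_apply]; ring
  have hsep : 0 ≤ (x - y) ⬝ᵥ fun i => f' i (x i) - f' i (y i) :=
    Finset.sum_nonneg fun i _ => by
      simp only [Pi.sub_apply]; nlinarith [hconv i (x i) (y i), hconv i (y i) (x i)]
  rw [hsplit, dotProduct_add]
  linarith [hM (x - y) (sub_ne_zero.2 hxy)]

theorem exists_solvesBoxVI [DecidableEq ι] {X : ι → Set ℝ}
    (hX : ∀ i, (X i).Nonempty ∧ Convex ℝ (X i) ∧ IsCompact (X i)) {f f' : ι → ℝ → ℝ}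
    (hf : ∀ i x, HasDerivAt (f i) (f' i x) x) (hconv : ∀ i x y, f i x + f' i x * (y - x) ≤ f i y)
    {M : Matrix ι ι ℝ} (hM : ∀ z, z ≠ 0 → 0 < z ⬝ᵥ M *ᵥ z) (c : ι → ℝ) :
    ∃ x, SolvesBoxVI X (fun x => (fun i => f' i (x i)) + M *ᵥ x - c) x := by
  set A := toEuclideanCLM (𝕜 := ℝ) M
  have hA : ∀ z, z ≠ 0 → 0 < ⟪A z, z⟫ := fun z hz => by
    rw [real_inner_comm, inner_toEuclideanCLM]
    exact hM _ (by simpa using hz)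
  obtain ⟨t, ht, ρ, hρ, hcontr⟩ := A.exists_norm_sub_smul_le hA
  choose P hP hPlip using fun i => exists_lipschitzWith_one_resolvent (hX i).1 (hX i).2.1
    (hX i).2.2 (f := fun u => t * f i u) (f' := fun u => t * f' i u)
    (fun x => (hf i x).const_mul t)
    (fun x y => by nlinarith [mul_le_mul_of_nonneg_left (hconv i x y) ht.le])
  -- a forward step in `M`, then the resolvent of `t f'` coordinatewise
  let T : EuclideanSpace ℝ ι → EuclideanSpace ℝ ι := fun x =>
    toLp 2 fun i => P i ((x - t • (A x - toLp 2 c)) i)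
  have hT : ContractingWith ρ T := by
    refine ⟨hρ, LipschitzWith.of_dist_le_mul fun x y => ?_⟩
    calc dist (T x) (T y) ≤ dist (x - t • (A x - toLp 2 c)) (y - t • (A y - toLp 2 c)) := by
          rw [EuclideanSpace.dist_eq, EuclideanSpace.dist_eq]
          gcongr with i
          exact ((hPlip i).dist_le_mul _ _).trans_eq (by rw [NNReal.coe_one, one_mul])
      _ = ‖(x - y) - t • A (x - y)‖ := by
          rw [dist_eq_norm, map_sub]; congr 1; module
      _ ≤ ρ * dist x y := by rw [dist_eq_norm]; exact hcontr _
  set x₀ := hT.fixedPoint T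
  have hx₀ : T x₀ = x₀ := hT.fixedPoint_isFixedPt
  refine ⟨ofLp x₀, fun i => ?_⟩
  have hi : P i (x₀ i - t * ((M *ᵥ ofLp x₀) i - c i)) = x₀ i := by
    simpa [T, A] using congrArg (· i) hx₀
  obtain ⟨hmem, hvi⟩ := hP i (x₀ i - t * ((M *ᵥ ofLp x₀) i - c i))
  rw [hi] at hmem hvi
  refine ⟨hmem, fun v hv => ?_⟩
  have := hvi v hv
  simp only [Pi.add_apply, Pi.sub_apply]
  nlinarith

theorem existsUnique_solvesBoxVI [DecidableEq ι] {X : ι → Set ℝ}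
    (hX : ∀ i, (X i).Nonempty ∧ Convex ℝ (X i) ∧ IsCompact (X i)) {f f' : ι → ℝ → ℝ}
    (hf : ∀ i x, HasDerivAt (f i) (f' i x) x) (hconv : ∀ i x y, f i x + f' i x * (y - x) ≤ f i y)
    {M : Matrix ι ι ℝ} (hM : ∀ z, z ≠ 0 → 0 < z ⬝ᵥ M *ᵥ z) (c : ι → ℝ) :
    ∃! x, SolvesBoxVI X (fun x => (fun i => f' i (x i)) + M *ᵥ x - c) x :=
  let ⟨x, hx⟩ := exists_solvesBoxVI hX hf hconv hM c
  ⟨x, hx, fun _ hy => hy.eq_of_dotProduct_sub_pos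
    (fun _ _ => dotProduct_sub_separable_add_mulVec_pos hconv hM c) hx⟩

theorem Matrix.dotProduct_mulVec_self_eq_half_add_transpose (A : Matrix ι ι ℝ) (z : ι → ℝ) :
    z ⬝ᵥ A *ᵥ z = z ⬝ᵥ ((2 : ℝ)⁻¹ • (A + Aᵀ)) *ᵥ z := by
  rw [smul_mulVec, dotProduct_smul, add_mulVec, dotProduct_add, mulVec_transpose,
    dotProduct_comm z (z ᵥ* A), ← dotProduct_mulVec, smul_eq_mul]
  ring

end BoxVI

theorem utility_eq {N : ℕ} (a b : Fin N → ℝ) (δ : ℝ) {G : Matrix (Fin N) (Fin N) ℝ} {i : Fin N}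
    (hG : G i i = 0) (h : Fin N → ℝ → ℝ) (p x : Fin N → ℝ) (y : ℝ) :
    utility a b δ G h p x i y = (a i - b i * p i + δ * (G *ᵥ x) i) * y - h i y := by
  have hsum : ∑ j, G i j * Function.update x i y j = (G *ᵥ x) i := by
    refine Finset.sum_congr rfl fun j _ => ?_
    rcases eq_or_ne j i with rfl | hj
    · simp [hG]
    · rw [Function.update_of_ne hj]
  rw [utility, hsum]

theorem isNashEq_iff_solvesBoxVI {N : ℕ} {X : Fin N → Set ℝ} (hX : ∀ i, Convex ℝ (X i))
    (a b : Fin N → ℝ) (δ : ℝ) {G : Matrix (Fin N) (Fin N) ℝ} (hG : ∀ i, G i i = 0)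
    {h : Fin N → ℝ → ℝ} (hd : ∀ i, Differentiable ℝ (h i)) {μ : Fin N → ℝ} (hμ : ∀ i, 0 ≤ μ i)
    (hsc : ∀ i, ∀ x y : ℝ, h i y ≥ h i x + deriv (h i) x * (y - x) + μ i / 2 * (y - x) ^ 2)
    (p x : Fin N → ℝ) :
    IsNashEq X a b δ G h p x ↔
      SolvesBoxVI X (fun x i => deriv (h i) (x i) - (a i - b i * p i + δ * (G *ᵥ x) i)) x := by
  refine forall_congr' fun i => and_congr_right fun hxi => ?_
  set s := a i - b i * p i + δ * (G *ᵥ x) i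
  have key := isMinOn_iff_forall_deriv_mul_sub_nonneg (g := fun u => h i u - s * u) (hX i) hxi
    (((hd i (x i)).hasDerivAt.fun_sub ((hasDerivAt_id' (x i)).const_mul s)).congr_deriv
      (by rw [mul_one]))
    (fun v => by nlinarith [hsc i (x i) v, mul_nonneg (hμ i) (sq_nonneg (v - x i))])
  refine (forall₂_congr fun y _ => ?_).trans (isMinOn_iff.symm.trans key)
  rw [utility_eq a b δ (hG i), utility_eq a b δ (hG i)]
  constructor <;> intro <;> linarith

theorem unique_nash_equilibrium_variational_general {N : ℕ}
    (X : Fin N → Set ℝ)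
    (hX : ∀ i, (X i).Nonempty ∧ Convex ℝ (X i) ∧ IsCompact (X i))
    (a b : Fin N → ℝ) (δ : ℝ)
    (G : Matrix (Fin N) (Fin N) ℝ) (hGdiag : ∀ i, G i i = 0)
    (h : Fin N → ℝ → ℝ) (hC1 : ∀ i, ContDiff ℝ 1 (h i))
    (μ : Fin N → ℝ) (hμ : ∀ i, 0 < μ i)
    (hsc : ∀ i, ∀ x y : ℝ,
      h i y ≥ h i x + deriv (h i) x * (y - x) + μ i / 2 * (y - x) ^ 2)
    (hvar : ∀ z : Fin N → ℝ, z ≠ 0 →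
      0 < z ⬝ᵥ ((Matrix.diagonal μ - δ • ((2 : ℝ)⁻¹ • (G + Gᵀ))) *ᵥ z)) :
    ∀ p : Fin N → ℝ, ∃! x : Fin N → ℝ, IsNashEq X a b δ G h p x := by
  intro p
  have hd : ∀ i, Differentiable ℝ (h i) := fun i => (hC1 i).differentiable one_ne_zero
  have hM : ∀ z, z ≠ 0 → 0 < z ⬝ᵥ (diagonal μ - δ • G) *ᵥ z := fun z hz => by
    rw [dotProduct_mulVec_self_eq_half_add_transpose]
    convert hvar z hz using 3
    rw [transpose_sub, diagonal_transpose, transpose_smul]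
    module
  -- `h i - μ i u² / 2` is convex; the quadratic part joins `δ G` in the matrix
  have hF : (fun x i => deriv (h i) (x i) - (a i - b i * p i + δ * (G *ᵥ x) i)) =
      fun x => (fun i => deriv (h i) (x i) - μ i * x i) + (diagonal μ - δ • G) *ᵥ x
        - fun i => a i - b i * p i := by
    ext x i
    simp only [sub_mulVec, mulVec_diagonal, smul_mulVec, Pi.add_apply, Pi.sub_apply,
      Pi.smul_apply, smul_eq_mul]
    ring
  simp only [isNashEq_iff_solvesBoxVI (fun i => (hX i).2.1) a b δ hGdiag hd (fun i => (hμ i).le)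
    hsc p, hF]
  exact existsUnique_solvesBoxVI hX (f := fun i u => h i u - μ i / 2 * u ^ 2)
    (f' := fun i u => deriv (h i) u - μ i * u)
    (fun i x => ((hd i x).hasDerivAt.fun_sub
      ((hasDerivAt_pow 2 x).const_mul (μ i / 2))).congr_deriv (by ring))
    (fun i x y => by nlinarith [hsc i x y]) hM _

/-- Uniqueness of the Nash equilibrium under the variational condition:
`D − δ (G + Gᵀ)/2` is positive definite, with `D = diag(μ)`. -/
theorem unique_nash_equilibrium_variational {N : ℕ}
    (X : Fin N → Set ℝ)
    (hX : ∀ i, (X i).Nonempty ∧ Convex ℝ (X i) ∧ IsCompact (X i))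
    (a b : Fin N → ℝ) (δ : ℝ) (hδ : 0 ≤ δ)
    (G : Matrix (Fin N) (Fin N) ℝ) (hGdiag : ∀ i, G i i = 0)
    (h : Fin N → ℝ → ℝ) (hC1 : ∀ i, ContDiff ℝ 1 (h i))
    (μ : Fin N → ℝ) (hμ : ∀ i, 0 < μ i)
    (hsc : ∀ i, ∀ x y : ℝ,
      h i y ≥ h i x + deriv (h i) x * (y - x) + μ i / 2 * (y - x) ^ 2)
    (hvar : ∀ z : Fin N → ℝ, z ≠ 0 →
      0 < z ⬝ᵥ ((Matrix.diagonal μ - δ • ((2 : ℝ)⁻¹ • (G + Gᵀ))) *ᵥ z)) :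
    ∀ p : Fin N → ℝ, ∃! x : Fin N → ℝ, IsNashEq X a b δ G h p x :=
  unique_nash_equilibrium_variational_general X hX a b δ G hGdiag h hC1 μ hμ hsc hvar
end

section
/- Let G be an N×N real matrix that is symmetric with nonnegative entries, and let D = diag(μ_1,…,μ_N) with μ_i > 0 for all i, and δ ≥ 0. Then the contraction condition ρ(δ·D^{-1}·|G|) < 1 and the variational condition that D − δ·(G + Gᵀ)/2 is positive definite are equivalent, and both are equivalent to δ·ρ(D^{-1}G) < 1. -/
/-!
With `D = diag μ` and `A = δ G`, the matrix `D⁻¹ A` is similar to the symmetric matrix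
`S = D^{-1/2} A D^{-1/2}`, and `D - A = D^{1/2} (1 - S) D^{1/2}`; hence `D - A` is positive
definite iff every eigenvalue of `D⁻¹ A` (all of them real) is `< 1`. Nonnegativity of `A` turns
this one-sided bound into `|λ| < 1`: for an eigenvector `v`,
`|λ| v*Dv = |v*Av| ≤ |v|ᵀ A |v| < |v|ᵀ D |v|`. For symmetric nonnegative `G` we have
`|G| = G = (G + Gᵀ)/2`, and the last equivalence is homogeneity of the spectral radius.
-/

open Matrix

open scoped Pointwise

section SpectralRadius

variable {n : Type*} [Fintype n] [DecidableEq n]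

theorem specRad_eq_sSup_image_norm (M : Matrix n n ℝ) :
    specRad M = sSup (norm '' spectrum ℂ (M.map (algebraMap ℝ ℂ))) := by
  simp only [specRad, Set.image, eq_comm]

theorem specRad_lt_one_iff (M : Matrix n n ℝ) :
    specRad M < 1 ↔ ∀ z ∈ spectrum ℂ (M.map (algebraMap ℝ ℂ)), ‖z‖ < 1 := by
  rw [specRad_eq_sSup_image_norm]
  obtain h | h := (spectrum ℂ (M.map (algebraMap ℝ ℂ))).eq_empty_or_nonempty
  · simp only [h, Set.image_empty, Real.sSup_empty, zero_lt_one, Set.mem_empty_iff_false,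
      false_imp_iff, implies_true]
  · exact (((finite_spectrum _).image _).csSup_lt_iff (h.image _)).trans Set.forall_mem_image

theorem specRad_zero : specRad (0 : Matrix n n ℝ) = 0 := by
  rw [specRad_eq_sSup_image_norm, Matrix.map_zero _ (map_zero _)]
  cases isEmpty_or_nonempty n
  · simp [spectrum.of_subsingleton]
  · simp [spectrum.zero_eq]

theorem specRad_smul (M : Matrix n n ℝ) {c : ℝ} (hc : 0 ≤ c) :
    specRad (c • M) = c * specRad M := by
  obtain rfl | hc := hc.eq_or_lt
  · rw [zero_smul, specRad_zero, zero_mul]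
  have hmap : (c • M).map (algebraMap ℝ ℂ) =
      Units.mk0 (c : ℂ) (by exact_mod_cast hc.ne') • M.map (algebraMap ℝ ℂ) := by
    ext i j
    simp
  rw [specRad_eq_sSup_image_norm, specRad_eq_sSup_image_norm, hmap, spectrum.unit_smul_eq_smul,
    ← smul_eq_mul, ← Real.sSup_smul_of_nonneg hc.le, ← Set.image_smul, ← Set.image_smul,
    Set.image_image, Set.image_image]
  congr 2 with z
  simp [abs_of_pos hc]

theorem ofReal_mem_spectrum_map_iff (M : Matrix n n ℝ) (r : ℝ) :
    (r : ℂ) ∈ spectrum ℂ (M.map (algebraMap ℝ ℂ)) ↔ r ∈ spectrum ℝ M := by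
  rw [mem_spectrum_iff_isRoot_charpoly, mem_spectrum_iff_isRoot_charpoly, charpoly_map,
    Polynomial.IsRoot, Polynomial.IsRoot, Polynomial.eval_map_algebraMap,
    ← Complex.coe_algebraMap, Polynomial.aeval_algebraMap_apply_eq_algebraMap_eval,
    Complex.coe_algebraMap, Complex.ofReal_eq_zero]

theorem exists_mulVec_eq_smul_of_mem_spectrum {K : Type*} [Field K] {M : Matrix n n K} {z : K}
    (hz : z ∈ spectrum K M) : ∃ v ≠ 0, M *ᵥ v = z • v := by
  rw [← spectrum_toLin', ← Module.End.hasEigenvalue_iff_mem_spectrum] at hz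
  obtain ⟨v, hv⟩ := hz.exists_hasEigenvector
  exact ⟨v, hv.2, by simpa using hv.apply_eq_smul⟩

end SpectralRadius

theorem norm_star_dotProduct_map_mulVec_le {n : Type*} [Fintype n] {A : Matrix n n ℝ}
    (hA : ∀ i j, 0 ≤ A i j) (v : n → ℂ) :
    ‖star v ⬝ᵥ (A.map (algebraMap ℝ ℂ) *ᵥ v)‖ ≤ (fun i => ‖v i‖) ⬝ᵥ (A *ᵥ fun i => ‖v i‖) := by
  simp only [dotProduct, mulVec, Finset.mul_sum]
  refine (norm_sum_le _ _).trans (Finset.sum_le_sum fun i _ => (norm_sum_le _ _).trans_eq ?_)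
  refine Finset.sum_congr rfl fun j _ => ?_
  simp [abs_of_nonneg (hA i j)]

theorem Matrix.IsHermitian.posDef_one_sub {n : Type*} [Fintype n] [DecidableEq n]
    {S : Matrix n n ℝ} (hS : S.IsHermitian) (h : ∀ r ∈ spectrum ℝ S, r < 1) :
    (1 - S).PosDef := by
  have h1S : (1 - S).IsHermitian := isHermitian_one.sub hS
  refine h1S.posDef_iff_eigenvalues_pos.mpr fun i => ?_
  have ht : h1S.eigenvalues i ∈ ({1} : Set ℝ) - spectrum ℝ S := by
    rw [spectrum.singleton_sub_eq, map_one]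
    exact h1S.eigenvalues_mem_spectrum_real i
  obtain ⟨_, rfl, r, hr, hrt⟩ := ht
  rw [← hrt, sub_pos]
  exact h r hr

section DiagonalScaling

variable {n : Type*} [Fintype n] [DecidableEq n] {μ : n → ℝ} {A : Matrix n n ℝ}

theorem norm_lt_one_of_mem_spectrum_diagonal_inv_mul (hμ : ∀ i, 0 < μ i) (hA : ∀ i j, 0 ≤ A i j)
    (hpos : ∀ x : n → ℝ, x ≠ 0 → 0 < x ⬝ᵥ ((diagonal μ - A) *ᵥ x)) {z : ℂ}
    (hz : z ∈ spectrum ℂ ((diagonal (fun i => (μ i)⁻¹) * A).map (algebraMap ℝ ℂ))) :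
    ‖z‖ < 1 := by
  obtain ⟨v, hv, hvz⟩ := exists_mulVec_eq_smul_of_mem_spectrum hz
  set w : n → ℝ := fun i => ‖v i‖
  have hw : w ≠ 0 := fun h => hv (funext fun i => norm_eq_zero.mp (congrFun h i))
  have hAv : ∀ i, (A.map (algebraMap ℝ ℂ) *ᵥ v) i = z * (μ i * v i) := by
    intro i
    have h := congrFun hvz i
    rw [Matrix.map_mul, ← mulVec_mulVec, diagonal_map (map_zero _), mulVec_diagonal] at h
    have : (μ i : ℂ) ≠ 0 := by exact_mod_cast (hμ i).ne'
    simp only [Complex.coe_algebraMap, Complex.ofReal_inv, Pi.smul_apply, smul_eq_mul] at h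
    field_simp at h
    linear_combination h
  have hquad : star v ⬝ᵥ (A.map (algebraMap ℝ ℂ) *ᵥ v) = z * (w ⬝ᵥ (diagonal μ *ᵥ w) : ℝ) := by
    simp only [dotProduct, hAv, mulVec_diagonal]
    push_cast
    rw [Finset.mul_sum]
    refine Finset.sum_congr rfl fun i _ => ?_
    rw [Pi.star_apply, RCLike.star_def]
    linear_combination (z * μ i) * RCLike.conj_mul (v i)
  have hlt : w ⬝ᵥ (A *ᵥ w) < w ⬝ᵥ (diagonal μ *ᵥ w) := by
    simpa only [sub_mulVec, dotProduct_sub, sub_pos] using hpos w hw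
  have hbound := norm_star_dotProduct_map_mulVec_le hA v
  have hq : 0 < w ⬝ᵥ (diagonal μ *ᵥ w) := ((norm_nonneg _).trans hbound).trans_lt hlt
  refine lt_of_mul_lt_mul_right ?_ hq.le
  calc ‖z‖ * (w ⬝ᵥ (diagonal μ *ᵥ w))
      = ‖star v ⬝ᵥ (A.map (algebraMap ℝ ℂ) *ᵥ v)‖ := by
        rw [hquad, norm_mul, Complex.norm_real, Real.norm_of_nonneg hq.le]
    _ ≤ w ⬝ᵥ (A *ᵥ w) := hbound
    _ < 1 * (w ⬝ᵥ (diagonal μ *ᵥ w)) := by rwa [one_mul]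

theorem posDef_diagonal_sub_of_spectrum_lt_one (hμ : ∀ i, 0 < μ i) (hA : A.IsHermitian)
    (h : ∀ r ∈ spectrum ℝ (diagonal (fun i => (μ i)⁻¹) * A), r < 1) :
    (diagonal μ - A).PosDef := by
  set s : n → ℝ := fun i => √(μ i)
  have hs : ∀ i, s i ≠ 0 := fun i => (Real.sqrt_pos.2 (hμ i)).ne'
  have hss : ∀ i, s i * s i = μ i := fun i => Real.mul_self_sqrt (hμ i).le
  set P := diagonal s
  set Q := diagonal s⁻¹
  have hPQ : P * Q = 1 := by simp [P, Q, diagonal_mul_diagonal, hs]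
  have hQP : Q * P = 1 := by simp [P, Q, diagonal_mul_diagonal, hs]
  have hPP : P * P = diagonal μ := by simp [P, diagonal_mul_diagonal, hss]
  have hQQ : Q * Q = diagonal fun i => (μ i)⁻¹ := by
    simp [Q, diagonal_mul_diagonal, ← mul_inv, hss]
  let U : (Matrix n n ℝ)ˣ := ⟨P, Q, hPQ, hQP⟩
  set S := Q * A * Q
  have hS : S.IsHermitian := by
    simpa [S, Q] using isHermitian_conjTranspose_mul_mul Q hA
  have hspec : spectrum ℝ S = spectrum ℝ (diagonal (fun i => (μ i)⁻¹) * A) := by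
    have hconj : Q * S * P = diagonal (fun i => (μ i)⁻¹) * A := by
      rw [show Q * S * P = Q * Q * A * (Q * P) by simp only [S, mul_assoc], hQQ, hQP, mul_one]
    rw [← hconj]
    exact (spectrum.units_conjugate' (u := U)).symm
  have hfactor : diagonal μ - A = Pᴴ * (1 - S) * P := by
    have hP : Pᴴ = P := by simp [P]
    rw [hP, ← hPP, mul_sub, sub_mul, mul_one]
    rw [show P * S * P = P * Q * A * (Q * P) by simp only [S, mul_assoc], hPQ, hQP, one_mul,
      mul_one]
  rw [hfactor]
  exact (hS.posDef_one_sub fun r hr => h r (hspec ▸ hr)).conjTranspose_mul_mul_same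
    (mulVec_injective_iff_isUnit.mpr U.isUnit)

end DiagonalScaling

/-- For a symmetric, entrywise nonnegative network `G`, the contraction condition
`ρ(δ D⁻¹ |G|) < 1` and the variational condition (`D − δ (G + Gᵀ)/2` positive
definite) are equivalent, and both are equivalent to `δ ρ(D⁻¹ G) < 1`. -/
theorem contraction_iff_variational_symmetric_nonneg {N : ℕ}
    (G : Matrix (Fin N) (Fin N) ℝ) (hsym : Gᵀ = G) (hpos : ∀ i j, 0 ≤ G i j)
    (μ : Fin N → ℝ) (hμ : ∀ i, 0 < μ i) (δ : ℝ) (hδ : 0 ≤ δ) :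
    (specRad (δ • (Matrix.diagonal fun i => (μ i)⁻¹) *
        Matrix.of (fun i j => |G i j|)) < 1 ↔
      ∀ z : Fin N → ℝ, z ≠ 0 →
        0 < z ⬝ᵥ ((Matrix.diagonal μ - δ • ((2 : ℝ)⁻¹ • (G + Gᵀ))) *ᵥ z)) ∧
    (specRad (δ • (Matrix.diagonal fun i => (μ i)⁻¹) *
        Matrix.of (fun i j => |G i j|)) < 1 ↔
      δ * specRad ((Matrix.diagonal fun i => (μ i)⁻¹) * G) < 1) := by
  have habs : Matrix.of (fun i j => |G i j|) = G := by
    ext i j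
    exact abs_of_nonneg (hpos i j)
  have hsymm : (2 : ℝ)⁻¹ • (G + Gᵀ) = G := by
    rw [hsym, ← two_smul ℝ G, smul_smul, inv_mul_cancel₀ two_ne_zero, one_smul]
  have hherm : (δ • G).IsHermitian := by
    rw [IsHermitian, conjTranspose_eq_transpose_of_trivial, transpose_smul, hsym]
  refine ⟨?_, by rw [smul_mul, habs, specRad_smul _ hδ]⟩
  rw [habs, hsymm, smul_mul, ← Matrix.mul_smul, specRad_lt_one_iff]
  refine ⟨fun h x hx => ?_, fun h z hz => ?_⟩
  · have hpd := posDef_diagonal_sub_of_spectrum_lt_one hμ hherm fun r hr =>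
      (le_abs_self r).trans_lt (by simpa using h _ ((ofReal_mem_spectrum_map_iff _ _).mpr hr))
    simpa using hpd.dotProduct_mulVec_pos hx
  · exact norm_lt_one_of_mem_spectrum_diagonal_inv_mul hμ (fun i j => mul_nonneg hδ (hpos i j))
      h hz
end

section
/- Let G be an N×N real matrix with nonnegative entries, let μ_1,…,μ_N > 0, D = diag(μ_1,…,μ_N), δ ≥ 0 with ρ(δ·D^{-1}·G) < 1, and let P = diag(d_1,…,d_N) with d_i ≥ μ_i for all i. Then (P − δG)^{-1} ≤ (D − δG)^{-1} entrywise, and consequently [𝟙ᵀ(P − δG)^{-1}]_i ≤ [𝟙ᵀ(D − δG)^{-1}]_i for every coordinate i, where 𝟙 is the all-ones vector. Moreover, if d_i = μ_i for all i (i.e. P = D), equality holds. -/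
open Matrix

/-!
Put `A = δ D⁻¹ G` and `B = δ P⁻¹ G`, so that `0 ≤ B ≤ A` entrywise. By Gelfand's formula for the
complexification of `A`, the hypothesis `ρ(A) < 1` makes the Neumann series `∑ Aᵏ` converge, and
`D − δG = D (1 − A)` gives `(D − δG)⁻¹ = (∑ Aᵏ) D⁻¹`. Termwise `0 ≤ Bᵏ ≤ Aᵏ`, so `∑ Bᵏ` converges
too, `(P − δG)⁻¹ = (∑ Bᵏ) P⁻¹`, and `∑ Bᵏ ≤ ∑ Aᵏ` together with `P⁻¹ ≤ D⁻¹` gives the bound.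
-/

open Filter NNReal

theorem spectrum.summable_pow_of_spectralRadius_lt_one {A : Type*} [NormedRing A]
    [NormedAlgebra ℂ A] [CompleteSpace A] {a : A} (ha : spectralRadius ℂ a < 1) :
    Summable (a ^ ·) := by
  obtain ⟨r, hρr, hr1⟩ := ENNReal.lt_iff_exists_nnreal_btwn.1 ha
  refine .of_norm_bounded_eventually_nat (summable_geometric_of_lt_one r.2 (mod_cast hr1)) ?_
  filter_upwards [(pow_nnnorm_pow_one_div_tendsto_nhds_spectralRadius a).eventually_lt_const hρr,
    eventually_gt_atTop 0] with n hn hn0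
  have hn' : ‖a ^ n‖₊ ^ (n : ℝ)⁻¹ < r := by
    rw [← ENNReal.coe_rpow_of_nonneg _ (by positivity), one_div] at hn
    exact_mod_cast hn
  rw [NNReal.rpow_inv_lt_iff (by positivity), NNReal.rpow_natCast] at hn'
  exact_mod_cast hn'.le

namespace Matrix

section Summable

variable {ι m n R : Type*} [AddCommMonoid R] [TopologicalSpace R] {f : ι → Matrix m n R}

theorem summable_iff_apply : Summable f ↔ ∀ i j, Summable fun k => f k i j :=
  Pi.summable.trans (forall_congr' fun _ => Pi.summable)

theorem tsum_apply [T2Space R] (hf : Summable f) (i : m) (j : n) :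
    (∑' k, f k) i j = ∑' k, f k i j :=
  (Pi.hasSum.1 (Pi.hasSum.1 hf.hasSum i) j).tsum_eq.symm

end Summable

end Matrix

section SpectralRadius

variable {n : Type*} [Fintype n] [DecidableEq n]

theorem norm_le_specRad {M : Matrix n n ℝ} {z : ℂ}
    (hz : z ∈ spectrum ℂ (M.map (algebraMap ℝ ℂ))) : ‖z‖ ≤ specRad M := by
  refine le_csSup ?_ ⟨z, hz, rfl⟩
  refine (((M.map (algebraMap ℝ ℂ)).finite_spectrum.image (‖·‖)).subset ?_).bddAbove
  rintro _ ⟨w, hw, rfl⟩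
  exact ⟨w, hw, rfl⟩

attribute [local instance] Matrix.linftyOpNormedRing Matrix.linftyOpNormedAlgebra

theorem spectralRadius_map_lt_of_specRad_lt {M : Matrix n n ℝ} {r : ℝ≥0}
    (h : specRad M < r) : spectralRadius ℂ (M.map (algebraMap ℝ ℂ)) < r := by
  rcases (spectrum ℂ (M.map (algebraMap ℝ ℂ))).eq_empty_or_nonempty with hσ | hσ
  · have h0 : specRad M = 0 := by simp only [specRad, hσ]; simp
    rw [spectralRadius, hσ]
    simpa [h0] using h
  · exact spectrum.spectralRadius_lt_of_forall_lt_of_nonempty hσ fun z hz =>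
      mod_cast (norm_le_specRad hz).trans_lt h

theorem Matrix.summable_pow_of_specRad_lt_one {M : Matrix n n ℝ} (h : specRad M < 1) :
    Summable (M ^ ·) := by
  have hρ : spectralRadius ℂ (M.map (algebraMap ℝ ℂ)) < 1 := by
    simpa using spectralRadius_map_lt_of_specRad_lt (r := 1) (by simpa using h)
  have hc : Summable fun k => M.map (algebraMap ℝ ℂ) ^ k :=
    spectrum.summable_pow_of_spectralRadius_lt_one hρ
  simp only [← Matrix.map_pow] at hc
  exact Matrix.summable_iff_apply.2 fun i j =>
    Complex.summable_ofReal.1 (Matrix.summable_iff_apply.1 hc i j)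

end SpectralRadius

namespace Matrix

variable {n : Type*} [Fintype n] [DecidableEq n]

theorem pow_apply_le_pow_apply {R : Type*} [Semiring R] [PartialOrder R] [IsOrderedRing R]
    {A B : Matrix n n R} (hB : ∀ i j, 0 ≤ B i j) (hBA : ∀ i j, B i j ≤ A i j) (k : ℕ)
    (i j : n) : (B ^ k) i j ≤ (A ^ k) i j := by
  induction k generalizing j with
  | zero => rfl
  | succ k ih =>
    rw [pow_succ, pow_succ, mul_apply, mul_apply]
    exact Finset.sum_le_sum fun l _ =>
      mul_le_mul (ih l) (hBA l j) (hB l j) ((pow_apply_nonneg hB k i l).trans (ih l))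

theorem inv_diagonal_sub_eq_tsum_mul {K : Type*} [Field K] [TopologicalSpace K]
    [IsTopologicalRing K] [T2Space K] {v : n → K} (hv : ∀ i, v i ≠ 0) {M : Matrix n n K}
    (hM : Summable ((diagonal v⁻¹ * M) ^ ·)) :
    (diagonal v - M)⁻¹ = (∑' k, (diagonal v⁻¹ * M) ^ k) * diagonal v⁻¹ := by
  have hvv : diagonal v * diagonal v⁻¹ = 1 := by
    rw [diagonal_mul_diagonal, ← diagonal_one]
    exact congrArg diagonal (funext fun i => mul_inv_cancel₀ (hv i))
  have hfac : diagonal v - M = diagonal v * (1 - diagonal v⁻¹ * M) := by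
    rw [Matrix.mul_sub, Matrix.mul_one, ← Matrix.mul_assoc, hvv, Matrix.one_mul]
  apply inv_eq_right_inv
  rw [hfac, Matrix.mul_assoc, ← Matrix.mul_assoc (1 - _), hM.one_sub_mul_tsum_pow, Matrix.one_mul,
    hvv]

section Comparison

variable {A B : Matrix n n ℝ}

theorem summable_pow_of_nonneg_of_le (hB : ∀ i j, 0 ≤ B i j) (hBA : ∀ i j, B i j ≤ A i j)
    (hA : Summable (A ^ ·)) : Summable (B ^ ·) :=
  summable_iff_apply.2 fun i j =>
    (summable_iff_apply.1 hA i j).of_nonneg_of_le (fun k => pow_apply_nonneg hB k i j)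
      (fun k => pow_apply_le_pow_apply hB hBA k i j)

theorem tsum_pow_apply_nonneg (hA0 : ∀ i j, 0 ≤ A i j) (hA : Summable (A ^ ·)) (i j : n) :
    0 ≤ (∑' k, A ^ k) i j := by
  rw [tsum_apply hA]
  exact tsum_nonneg fun k => pow_apply_nonneg hA0 k i j

theorem tsum_pow_apply_le_tsum_pow_apply (hB : ∀ i j, 0 ≤ B i j) (hBA : ∀ i j, B i j ≤ A i j)
    (hA : Summable (A ^ ·)) (i j : n) : (∑' k, B ^ k) i j ≤ (∑' k, A ^ k) i j := by
  have hB' := summable_pow_of_nonneg_of_le hB hBA hA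
  rw [tsum_apply hA, tsum_apply hB']
  exact (summable_iff_apply.1 hB' i j).tsum_le_tsum
    (fun k => pow_apply_le_pow_apply hB hBA k i j) (summable_iff_apply.1 hA i j)

theorem inv_diagonal_sub_apply_le_of_le {μ d : n → ℝ} (hμ : ∀ i, 0 < μ i) (hd : ∀ i, μ i ≤ d i)
    {M : Matrix n n ℝ} (hM : ∀ i j, 0 ≤ M i j) (hsum : Summable ((diagonal μ⁻¹ * M) ^ ·))
    (i j : n) : (diagonal d - M)⁻¹ i j ≤ (diagonal μ - M)⁻¹ i j := by
  have hdpos i : 0 < d i := (hμ i).trans_le (hd i)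
  have hB i j : 0 ≤ (diagonal d⁻¹ * M) i j := by
    rw [diagonal_mul]
    exact mul_nonneg (inv_nonneg.2 (hdpos i).le) (hM i j)
  have hBA i j : (diagonal d⁻¹ * M) i j ≤ (diagonal μ⁻¹ * M) i j := by
    rw [diagonal_mul, diagonal_mul]
    exact mul_le_mul_of_nonneg_right (inv_anti₀ (hμ i) (hd i)) (hM i j)
  rw [inv_diagonal_sub_eq_tsum_mul (fun i => (hμ i).ne') hsum,
    inv_diagonal_sub_eq_tsum_mul (fun i => (hdpos i).ne') (summable_pow_of_nonneg_of_le hB hBA hsum),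
    mul_diagonal, mul_diagonal]
  exact mul_le_mul (tsum_pow_apply_le_tsum_pow_apply hB hBA hsum i j) (inv_anti₀ (hμ j) (hd j))
    (inv_nonneg.2 (hdpos j).le)
    (tsum_pow_apply_nonneg (fun i j => (hB i j).trans (hBA i j)) hsum i j)

end Comparison

end Matrix

/-- Under the contraction condition `ρ(δ D⁻¹ G) < 1` with `G` entrywise nonnegative,
and `P = diag(d)` with `d_i ≥ μ_i`: `(P − δG)⁻¹ ≤ (D − δG)⁻¹` entrywise, hence
`[𝟙ᵀ (P − δG)⁻¹]_i ≤ [𝟙ᵀ (D − δG)⁻¹]_i` for every `i`; with equality when `d = μ`. -/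
theorem inverse_entrywise_bound {N : ℕ}
    (G : Matrix (Fin N) (Fin N) ℝ) (hG : ∀ i j, 0 ≤ G i j)
    (μ : Fin N → ℝ) (hμ : ∀ i, 0 < μ i) (δ : ℝ) (hδ : 0 ≤ δ)
    (hcontr : specRad (δ • (Matrix.diagonal fun i => (μ i)⁻¹) * G) < 1)
    (d : Fin N → ℝ) (hd : ∀ i, μ i ≤ d i) :
    (∀ i j, ((Matrix.diagonal d - δ • G)⁻¹) i j ≤
      ((Matrix.diagonal μ - δ • G)⁻¹) i j) ∧
    (∀ i : Fin N,
      ((fun _ => (1 : ℝ)) ᵥ* (Matrix.diagonal d - δ • G)⁻¹) i ≤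
      ((fun _ => (1 : ℝ)) ᵥ* (Matrix.diagonal μ - δ • G)⁻¹) i) ∧
    ((∀ i, d i = μ i) →
      ∀ i : Fin N,
        ((fun _ => (1 : ℝ)) ᵥ* (Matrix.diagonal d - δ • G)⁻¹) i =
        ((fun _ => (1 : ℝ)) ᵥ* (Matrix.diagonal μ - δ • G)⁻¹) i) := by
  have hA_eq : δ • (diagonal fun i => (μ i)⁻¹) * G = diagonal μ⁻¹ * (δ • G) := by
    rw [smul_mul_assoc, mul_smul_comm]
    rfl
  have key := inv_diagonal_sub_apply_le_of_le hμ hd (fun i j => mul_nonneg hδ (hG i j))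
    (hA_eq ▸ summable_pow_of_specRad_lt_one hcontr)
  refine ⟨key, fun i => ?_, fun h i => by rw [funext h]⟩
  simp only [vecMul, dotProduct, one_mul]
  exact Finset.sum_le_sum fun k _ => key k i
end

section
/- Let ε₁,…,ε_n be independent real random variables, each zero-mean and sub-Gaussian with variance proxy σ² (i.e. E[exp(λ·ε_t)] ≤ exp(λ²σ²/2) for all λ ∈ ℝ). Partition {1,…,n} into m ≤ n consecutive nonempty blocks B₁,…,B_m, and for 1 ≤ r ≤ s ≤ m set o_{rs} := |B_r ∪ ⋯ ∪ B_s| and T_{rs} := Σ_{t ∈ B_r ∪ ⋯ ∪ B_s} ε_t. Then for any constant D > 1, the probability that max_{1 ≤ r ≤ s ≤ m} |T_{rs}| / √(o_{rs}) ≥ 2σ·√(D·ln n) is at most ((n + 1)/n^D)²; equivalently, with probability at least 1 − ((n + 1)/n^D)², |T_{rs}| ≤ 2σ·√(D·ln n)·√(o_{rs}) simultaneously for all 1 ≤ r ≤ s ≤ m. -/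
/-!
Each normalised block sum `T_{rs} / √o_{rs}` is sub-Gaussian with the same proxy `σ²`
(independence adds the proxies of the `o_{rs}` summands), so the two-sided Chernoff bound
makes its tail at level `2σ √(D ln n)` at most `2 n^{-2D}`. A union bound over the
`(m+1 choose 2) ≤ (n+1)²/2` pairs `r ≤ s` finishes the proof.
-/

open MeasureTheory ProbabilityTheory
open scoped NNReal ENNReal

namespace ProbabilityTheory

variable {Ω : Type*} [MeasurableSpace Ω] {μ : Measure Ω}

lemma hasSubgaussianMGF_of_lintegral_exp_le {X : Ω → ℝ} (hX : Measurable X) {c : ℝ≥0}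
    (h : ∀ t : ℝ, ∫⁻ ω, ENNReal.ofReal (Real.exp (t * X ω)) ∂μ ≤
      ENNReal.ofReal (Real.exp (c * t ^ 2 / 2))) :
    HasSubgaussianMGF X c μ := by
  have hexp_meas (t : ℝ) : AEStronglyMeasurable (fun ω ↦ Real.exp (t * X ω)) μ :=
    (hX.const_mul t).exp.aestronglyMeasurable
  have hexp_nonneg (t : ℝ) : 0 ≤ᵐ[μ] fun ω ↦ Real.exp (t * X ω) :=
    ae_of_all _ fun ω ↦ (Real.exp_pos _).le
  refine ⟨fun t ↦ ⟨hexp_meas t, ?_⟩, fun t ↦ ?_⟩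
  · rw [hasFiniteIntegral_iff_ofReal (hexp_nonneg t)]
    exact (h t).trans_lt ENNReal.ofReal_lt_top
  · rw [mgf, integral_eq_lintegral_of_nonneg_ae (hexp_nonneg t) (hexp_meas t)]
    exact ENNReal.toReal_le_of_le_ofReal (Real.exp_pos _).le (h t)

namespace HasSubgaussianMGF

lemma measure_le_abs_le [IsFiniteMeasure μ] {X : Ω → ℝ} {c : ℝ≥0}
    (h : HasSubgaussianMGF X c μ) {ε : ℝ} (hε : 0 ≤ ε) :
    μ {ω | ε ≤ |X ω|} ≤ ENNReal.ofReal (2 * Real.exp (-ε ^ 2 / (2 * c))) := by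
  have tail {Y : Ω → ℝ} (hY : HasSubgaussianMGF Y c μ) :
      μ {ω | ε ≤ Y ω} ≤ ENNReal.ofReal (Real.exp (-ε ^ 2 / (2 * c))) := by
    rw [← ofReal_measureReal]
    exact ENNReal.ofReal_le_ofReal (hY.measure_ge_le hε)
  calc μ {ω | ε ≤ |X ω|} ≤ μ ({ω | ε ≤ X ω} ∪ {ω | ε ≤ (-X) ω}) :=
        measure_mono fun ω (hω : ε ≤ |X ω|) ↦ le_abs.mp hω
    _ ≤ μ {ω | ε ≤ X ω} + μ {ω | ε ≤ (-X) ω} := measure_union_le _ _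
    _ ≤ ENNReal.ofReal (Real.exp (-ε ^ 2 / (2 * c))) +
          ENNReal.ofReal (Real.exp (-ε ^ 2 / (2 * c))) := add_le_add (tail h) (tail h.neg)
    _ = ENNReal.ofReal (2 * Real.exp (-ε ^ 2 / (2 * c))) := by
        rw [← ENNReal.ofReal_add (Real.exp_pos _).le (Real.exp_pos _).le, ← two_mul]

end HasSubgaussianMGF

lemma iIndepFun.measure_mul_sqrt_card_le_abs_sum_le [IsFiniteMeasure μ] {ι : Type*}
    {X : ι → Ω → ℝ} (hindep : iIndepFun X μ) {c : ℝ≥0} {S : Finset ι}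
    (hX : ∀ i ∈ S, HasSubgaussianMGF (X i) c μ) (hS : S.Nonempty) {a : ℝ} (ha : 0 ≤ a) :
    μ {ω | a * √(S.card : ℝ) ≤ |∑ i ∈ S, X i ω|} ≤
      ENNReal.ofReal (2 * Real.exp (-a ^ 2 / (2 * c))) := by
  have hsum := HasSubgaussianMGF.sum_of_iIndepFun hindep hX
  rw [Finset.sum_const] at hsum
  have hcard : (0 : ℝ) < S.card := by exact_mod_cast hS.card_pos
  have hvar : (a * √(S.card : ℝ)) ^ 2 / (2 * ↑(S.card • c)) = a ^ 2 / (2 * c) := by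
    rw [mul_pow, Real.sq_sqrt hcard.le, NNReal.coe_nsmul, nsmul_eq_mul,
      mul_left_comm, mul_comm (a ^ 2), mul_div_mul_left _ _ hcard.ne']
  simpa only [neg_div, hvar] using hsum.measure_le_abs_le (ε := a * √(S.card : ℝ)) (by positivity)

end ProbabilityTheory

lemma Fintype.card_subtype_fst_le_snd (α : Type*) [Fintype α] [LinearOrder α] :
    Fintype.card {p : α × α // p.1 ≤ p.2} = (Fintype.card α + 1).choose 2 := by
  rw [← Fintype.card_congr Sym2.sortEquiv, Sym2.card]

lemma Real.exp_neg_sq_div_eq_inv_rpow_sq {n : ℝ} (hn : 1 ≤ n) {σ : ℝ} (hσ : σ ≠ 0) {D : ℝ}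
    (hD : 0 ≤ D) :
    Real.exp (-(2 * σ * √(D * Real.log n)) ^ 2 / (2 * σ ^ 2)) = ((n ^ D) ^ 2)⁻¹ := by
  have hDlog : 0 ≤ D * Real.log n := mul_nonneg hD (Real.log_nonneg hn)
  have hexponent : -(2 * σ * √(D * Real.log n)) ^ 2 / (2 * σ ^ 2) = -(2 * (Real.log n * D)) := by
    rw [mul_pow, Real.sq_sqrt hDlog]
    field_simp
  rw [hexponent, Real.exp_neg, Real.rpow_def_of_pos (by linarith), ← Real.exp_nat_mul]
  norm_num

lemma Nat.cast_choose_two_mul_le_div_rpow_sq {m n : ℕ} (hm : m ≤ n) (D : ℝ) :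
    (((m + 1).choose 2 : ℕ) : ℝ) * (2 * (((n : ℝ) ^ D) ^ 2)⁻¹) ≤ (((n : ℝ) + 1) / n ^ D) ^ 2 := by
  have hcount : (m + 1).choose 2 * 2 ≤ (n + 1) ^ 2 := by
    rw [Nat.choose_two_right]
    calc (m + 1) * (m + 1 - 1) / 2 * 2 ≤ (m + 1) * (m + 1 - 1) := Nat.div_mul_le_self _ _
      _ ≤ (n + 1) ^ 2 := by rw [sq]; gcongr; omega
  rw [div_pow, div_eq_mul_inv, ← mul_assoc]
  gcongr
  exact_mod_cast hcount

theorem maximal_inequality_subgaussian_blocks_general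
    {Ω : Type*} [MeasurableSpace Ω] (μ : Measure Ω) [IsProbabilityMeasure μ]
    (n m : ℕ) (hm : m ≤ n)
    (ε : Fin n → Ω → ℝ) (hmeas : ∀ t, Measurable (ε t))
    (hindep : iIndepFun ε μ)
    (σ : ℝ) (hσ : 0 < σ)
    (hsubg : ∀ t, ∀ lam : ℝ,
      ∫⁻ ω, ENNReal.ofReal (Real.exp (lam * ε t ω)) ∂μ ≤
        ENNReal.ofReal (Real.exp (lam ^ 2 * σ ^ 2 / 2)))
    (B : Fin m → Finset (Fin n))
    (hBne : ∀ r, (B r).Nonempty)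
    (D : ℝ) (hD : 1 < D) :
    μ {ω | ∃ r s : Fin m, r ≤ s ∧
        2 * σ * Real.sqrt (D * Real.log n) *
          Real.sqrt (((Finset.Icc r s).biUnion B).card) ≤
        |∑ t ∈ (Finset.Icc r s).biUnion B, ε t ω|} ≤
      ENNReal.ofReal ((((n : ℝ) + 1) / (n : ℝ) ^ D) ^ 2) := by
  rcases Nat.eq_zero_or_pos n with rfl | hn
  · obtain rfl : m = 0 := Nat.le_zero.mp hm
    simp
  set η := 2 * σ * Real.sqrt (D * Real.log n)
  set S : {p : Fin m × Fin m // p.1 ≤ p.2} → Finset (Fin n) := fun p ↦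
    (Finset.Icc p.1.1 p.1.2).biUnion B
  have hσ2 : ((σ ^ 2).toNNReal : ℝ) = σ ^ 2 := Real.coe_toNNReal _ (sq_nonneg σ)
  have hsubG (t : Fin n) : HasSubgaussianMGF (ε t) (σ ^ 2).toNNReal μ :=
    hasSubgaussianMGF_of_lintegral_exp_le (hmeas t) fun lam ↦
      (hsubg t lam).trans_eq (by rw [hσ2, mul_comm (σ ^ 2)])
  have hblock (p : {p : Fin m × Fin m // p.1 ≤ p.2}) :
      μ {ω | η * √((S p).card : ℝ) ≤ |∑ t ∈ S p, ε t ω|} ≤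
        ENNReal.ofReal (2 * (((n : ℝ) ^ D) ^ 2)⁻¹) := by
    have hSne : (S p).Nonempty :=
      (hBne p.1.1).mono (Finset.subset_biUnion_of_mem B (Finset.left_mem_Icc.mpr p.2))
    have := hindep.measure_mul_sqrt_card_le_abs_sum_le (fun t _ ↦ hsubG t) hSne
      (a := η) (by positivity)
    rwa [hσ2, Real.exp_neg_sq_div_eq_inv_rpow_sq (by exact_mod_cast hn) hσ.ne'
      (by linarith)] at this
  calc _ ≤ ∑ p, μ {ω | η * √((S p).card : ℝ) ≤ |∑ t ∈ S p, ε t ω|} := by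
        refine (measure_mono ?_).trans (measure_iUnion_fintype_le μ _)
        rintro ω ⟨r, s, hrs, hω⟩
        exact Set.mem_iUnion.mpr ⟨⟨(r, s), hrs⟩, hω⟩
    _ ≤ ((m + 1).choose 2) • ENNReal.ofReal (2 * (((n : ℝ) ^ D) ^ 2)⁻¹) := by
        have := Finset.sum_le_card_nsmul Finset.univ _ _ fun p _ ↦ hblock p
        rwa [Finset.card_univ, Fintype.card_subtype_fst_le_snd, Fintype.card_fin] at this
    _ ≤ ENNReal.ofReal ((((n : ℝ) + 1) / (n : ℝ) ^ D) ^ 2) := by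
        rw [nsmul_eq_mul, ← ENNReal.ofReal_natCast, ← ENNReal.ofReal_mul (Nat.cast_nonneg _)]
        exact ENNReal.ofReal_le_ofReal (Nat.cast_choose_two_mul_le_div_rpow_sq hm D)

/-- Maximal inequality for sums of independent zero-mean sub-Gaussian variables over
unions of consecutive blocks: if `ε₁,…,ε_n` are independent, zero-mean and
sub-Gaussian with variance proxy `σ²`, and `{1,…,n}` is partitioned into `m ≤ n`
consecutive nonempty blocks `B₁,…,B_m`, then for any `D > 1`, with `o_{rs}` the size
of `B_r ∪ ⋯ ∪ B_s` and `T_{rs}` the sum of the `ε_t` over this union, the probability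
that `|T_{rs}| ≥ 2σ √(D ln n) √(o_{rs})` for some `r ≤ s` is at most
`((n+1)/n^D)²`. -/
theorem maximal_inequality_subgaussian_blocks
    {Ω : Type*} [MeasurableSpace Ω] (μ : Measure Ω) [IsProbabilityMeasure μ]
    (n m : ℕ) (hm : m ≤ n)
    (ε : Fin n → Ω → ℝ) (hmeas : ∀ t, Measurable (ε t))
    (hindep : iIndepFun ε μ)
    (σ : ℝ) (hσ : 0 < σ)
    (hmean : ∀ t, ∫ ω, ε t ω ∂μ = 0)
    (hsubg : ∀ t, ∀ lam : ℝ,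
      ∫⁻ ω, ENNReal.ofReal (Real.exp (lam * ε t ω)) ∂μ ≤
        ENNReal.ofReal (Real.exp (lam ^ 2 * σ ^ 2 / 2)))
    (B : Fin m → Finset (Fin n))
    (hBne : ∀ r, (B r).Nonempty)
    (hBcover : ∀ t : Fin n, ∃ r, t ∈ B r)
    (hBdisj : ∀ r s : Fin m, r ≠ s → Disjoint (B r) (B s))
    (hBconsec : ∀ r s : Fin m, r < s → ∀ t ∈ B r, ∀ u ∈ B s, t < u)
    (D : ℝ) (hD : 1 < D) :
    μ {ω | ∃ r s : Fin m, r ≤ s ∧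
        2 * σ * Real.sqrt (D * Real.log n) *
          Real.sqrt (((Finset.Icc r s).biUnion B).card) ≤
        |∑ t ∈ (Finset.Icc r s).biUnion B, ε t ω|} ≤
      ENNReal.ofReal ((((n : ℝ) + 1) / (n : ℝ) ^ D) ^ 2) :=
  maximal_inequality_subgaussian_blocks_general μ n m hm ε hmeas hindep σ hσ hsubg B hBne D hD
end
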